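/- arXiv:2604.18769 — 2 statements merged into one kernel-verified Lean document; each statement's English description precedes it below -/
import Mathlib

section
/- In the d-regular tree T_d, for every vertex x and every integer r ≥ 1, the ball B(x,r) = {y : dist(x,y) ≤ r} (graph distance) is a domain satisfying |∂B(x,r)| = d·(d−1)^{r−1} and (d−2)·|B(x,r)| + 2 = (d−1)·|∂B(x,r)|; consequently B(x,r) is isoperimetrically optimal. -/
/-- Inner vertex boundary of a finite vertex set `D`: vertices of `D` having a neighbor
outside `D`. -/
noncomputable def innerBoundary {V : Type*} (G : SimpleGraph V) (D : Finset V) : Finset V := by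
  classical exact D.filter (fun x => ∃ y, y ∉ D ∧ G.Adj x y)

/-- Outer vertex boundary of `D`: vertices outside `D` having a neighbor in `D`. -/
def outerBoundary {V : Type*} (G : SimpleGraph V) (D : Finset V) : Set V :=
  {y | y ∉ D ∧ ∃ x ∈ D, G.Adj x y}

/-- Number of neighbors of `x` lying in `D`. -/
noncomputable def degIn {V : Type*} (G : SimpleGraph V) (D : Finset V) (x : V) : ℕ := by
  classical exact (D.filter (fun y => G.Adj x y)).card

/-- A domain: a finite nonempty vertex set whose induced subgraph is connected. -/
def IsGraphDomain {V : Type*} (G : SimpleGraph V) (D : Finset V) : Prop :=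
  D.Nonempty ∧ (G.induce (↑D : Set V)).Connected

/-- `G` is a `d`-regular tree: connected, acyclic, and every vertex has degree `d`. -/
def IsRegularTree {V : Type*} (G : SimpleGraph V) (d : ℕ) : Prop :=
  G.Connected ∧ G.IsAcyclic ∧ ∀ v : V, (G.neighborSet v).ncard = d

/-- Boundary branching excess `τ(D) = Σ_{x ∈ ∂D} (deg_D(x) − 1)`. -/
noncomputable def tauD {V : Type*} (G : SimpleGraph V) (D : Finset V) : ℕ :=
  ∑ x ∈ innerBoundary G D, (degIn G D x - 1)

/-- Residual boundary `R(D) = {x ∈ ∂D : deg_D(x) ≥ 2}`. -/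
noncomputable def residualBoundary {V : Type*} (G : SimpleGraph V) (D : Finset V) : Finset V := by
  classical exact (innerBoundary G D).filter (fun x => 2 ≤ degIn G D x)

/-- `D` is isoperimetrically optimal: its inner boundary is smallest among all domains
of the same cardinality. -/
def IsOptimal {V : Type*} (G : SimpleGraph V) (D : Finset V) : Prop :=
  ∀ D' : Finset V, IsGraphDomain G D' → D'.card = D.card →
    (innerBoundary G D).card ≤ (innerBoundary G D').card

/-!
Summing inner degrees over a domain `D` of a `d`-regular tree counts the `|D| - 1` edges of the
induced subtree twice. Interior vertices contribute `d` and boundary vertices `1 + (deg_D - 1)`, so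
`(d - 2)|D| + 2 + τ(D) = (d - 1)|∂D|` whenever `|D| ≥ 2`: for fixed `|D|` the boundary is smallest
when `τ(D) = 0`. In a ball every boundary vertex lies on the sphere and has only its parent inside,
so `τ = 0`. Applying the identity to the nested balls and using `|B_k| = |B_{k-1}| + |∂B_k|` gives
`|∂B_k| = (d - 2)|B_{k-1}| + 2 = (d - 1)|∂B_{k-1}|`.
-/

open Finset SimpleGraph

namespace SimpleGraph

variable {V : Type*} {G : SimpleGraph V} {x y z u : V}

lemma dist_le_of_mem_support {p : G.Walk x y} (hp : p.length = G.dist x y)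
    (hu : u ∈ p.support) : G.dist x u ≤ G.dist x y := by
  classical
  calc G.dist x u ≤ (p.takeUntil u hu).length := dist_le _
    _ ≤ p.length := p.length_takeUntil_le_length hu
    _ = G.dist x y := hp

lemma Walk.dist_penultimate_add_one {p : G.Walk x y} (hp : p.length = G.dist x y)
    (hne : ¬ p.Nil) : G.dist x p.penultimate + 1 = G.dist x y := by
  rw [← length_eq_dist_of_subwalk hp (Walk.isSubwalk_rfl p).dropLast,
    Walk.length_dropLast_add_one hne, hp]

lemma IsAcyclic.eq_penultimate_of_dist_add_one (hG : G.IsAcyclic) {p : G.Walk x y}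
    (hp : p.length = G.dist x y) (hadj : G.Adj y z) (hz : G.dist x z + 1 = G.dist x y) :
    z = p.penultimate := by
  have hpath := p.isPath_of_length_eq_dist hp
  obtain ⟨q, hq, hql⟩ := (p.reachable.trans hadj.reachable).exists_path_of_dist
  have hy : y ∉ q.support := fun hy => by
    have := dist_le_of_mem_support hql hy
    omega
  exact hG.eq_penultimate_of_adj_end hpath hadj
    (hG.mem_support_of_ne_mem_support_of_adj_of_isPath hpath hq hadj hy)

lemma IsAcyclic.exists_adj_dist_eq_add_one (hG : G.IsAcyclic) (hxy : G.Reachable x y)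
    (hy : 1 < (G.neighborSet y).ncard) : ∃ z, G.Adj y z ∧ G.dist x z = G.dist x y + 1 := by
  obtain ⟨p, hp⟩ := hxy.exists_walk_length_eq_dist
  obtain ⟨z, hadj, hz⟩ := (G.neighborSet y).exists_ne_of_one_lt_ncard hy p.penultimate
  refine ⟨z, hadj, ?_⟩
  rcases hG.dist_eq_dist_add_one_of_adj_of_reachable x hadj hxy with h | h
  · exact absurd (hG.eq_penultimate_of_dist_add_one hp hadj h.symm) hz
  · exact h

end SimpleGraph

section Domain

variable {V : Type*} {G : SimpleGraph V} {D : Finset V}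

lemma degree_induce_eq_degIn [Fintype (D : Set V)] [DecidableRel (G.induce (D : Set V)).Adj]
    (v : (D : Set V)) : (G.induce (D : Set V)).degree v = degIn G D v := by
  classical
  unfold degIn
  rw [← card_neighborFinset_eq_degree,
    ← card_image_of_injective _ Subtype.val_injective]
  congr 1
  ext z
  simp only [mem_image, SimpleGraph.mem_neighborFinset, mem_filter]
  constructor
  · rintro ⟨w, hw, rfl⟩
    exact ⟨mem_coe.1 w.2, hw⟩
  · rintro ⟨hz, ha⟩
    exact ⟨⟨z, mem_coe.2 hz⟩, ha, rfl⟩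

lemma IsGraphDomain.sum_degIn_add_two (hG : G.IsAcyclic) (hD : IsGraphDomain G D) :
    ∑ v ∈ D, degIn G D v + 2 = 2 * #D := by
  classical
  have htree : (G.induce (D : Set V)).IsTree := ⟨hD.2, hG.induce _⟩
  have hedges := htree.card_edgeFinset
  simp only [coe_sort_coe, Fintype.card_coe] at hedges
  calc ∑ v ∈ D, degIn G D v + 2
      = ∑ v : (D : Set V), (G.induce (D : Set V)).degree v + 2 := by
        simp only [degree_induce_eq_degIn]
        exact congrArg (· + 2) (sum_coe_sort D (degIn G D)).symm
    _ = 2 * #D := by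
        rw [sum_degrees_eq_twice_card_edges]
        omega

lemma IsGraphDomain.one_le_degIn (hD : IsGraphDomain G D) (hD2 : 2 ≤ #D) {v : V}
    (hv : v ∈ D) : 1 ≤ degIn G D v := by
  classical
  have : Nontrivial (D : Set V) := by
    rw [Set.nontrivial_coe_sort, nontrivial_coe, ← one_lt_card_iff_nontrivial]
    omega
  rw [← degree_induce_eq_degIn ⟨v, hv⟩]
  exact hD.2.preconnected.degree_pos_of_nontrivial _

lemma degIn_eq_ncard_of_notMem_innerBoundary {v : V} (hv : v ∈ D)
    (hv' : v ∉ innerBoundary G D) : degIn G D v = (G.neighborSet v).ncard := by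
  classical
  unfold degIn
  rw [← Set.ncard_coe_finset]
  congr 1
  ext z
  unfold innerBoundary at hv'
  simp only [mem_filter, not_and, not_exists] at hv'
  simp only [coe_filter, Set.mem_ofPred_eq, mem_neighborSet]
  exact ⟨And.right, fun h => ⟨by_contra fun hz => hv' hv z hz h, h⟩⟩

end Domain

section Isoperimetry

variable {V : Type*} {G : SimpleGraph V} {D : Finset V} {d : ℕ}

lemma innerBoundary_subset : innerBoundary G D ⊆ D := by
  classical
  unfold innerBoundary
  exact filter_subset _ _

lemma sum_degIn_innerBoundary (hD : IsGraphDomain G D) (hD2 : 2 ≤ #D) :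
    ∑ v ∈ innerBoundary G D, degIn G D v = #(innerBoundary G D) + tauD G D := by
  unfold tauD
  rw [card_eq_sum_ones, ← sum_add_distrib]
  refine sum_congr rfl fun v hv => ?_
  have := hD.one_le_degIn hD2 (innerBoundary_subset hv)
  omega

theorem IsGraphDomain.isoperimetric_identity (hG : G.IsAcyclic)
    (hdeg : ∀ v, (G.neighborSet v).ncard = d) (hd : 2 ≤ d) (hD : IsGraphDomain G D)
    (hD2 : 2 ≤ #D) :
    (d - 2) * #D + 2 + tauD G D = (d - 1) * #(innerBoundary G D) := by
  classical
  have hsum := hD.sum_degIn_add_two hG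
  have hinterior : ∑ v ∈ D \ innerBoundary G D, degIn G D v
      = d * (#D - #(innerBoundary G D)) := by
    rw [sum_congr rfl fun v hv => (degIn_eq_ncard_of_notMem_innerBoundary
        (mem_sdiff.1 hv).1 (mem_sdiff.1 hv).2).trans (hdeg v),
      sum_const, smul_eq_mul, card_sdiff_of_subset innerBoundary_subset, mul_comm]
  rw [← sum_sdiff innerBoundary_subset, hinterior, sum_degIn_innerBoundary hD hD2] at hsum
  obtain ⟨e, rfl⟩ : ∃ e, d = e + 2 := ⟨d - 2, by omega⟩
  obtain ⟨m, hm⟩ : ∃ m, #D = #(innerBoundary G D) + m :=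
    Nat.exists_eq_add_of_le (card_le_card innerBoundary_subset)
  rw [hm, Nat.add_sub_cancel_left] at hsum
  rw [hm, Nat.add_sub_cancel, show e + 2 - 1 = e + 1 by omega]
  nlinarith [hsum]

theorem IsGraphDomain.isOptimal_of_tauD_eq_zero (hG : G.IsAcyclic)
    (hdeg : ∀ v, (G.neighborSet v).ncard = d) (hd : 2 ≤ d) (hD : IsGraphDomain G D)
    (hD2 : 2 ≤ #D) (hτ : tauD G D = 0) : IsOptimal G D := by
  intro D' hD' hcard
  have hD := hD.isoperimetric_identity hG hdeg hd hD2
  have hD' := hD'.isoperimetric_identity hG hdeg hd (hcard ▸ hD2)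
  rw [hτ, add_zero] at hD
  rw [hcard] at hD'
  exact Nat.le_of_mul_le_mul_left (by omega) (by omega : 0 < d - 1)

end Isoperimetry

lemma eq_mul_sub_one_pow_of_ball_identities {d r : ℕ} (hd : 2 ≤ d) {b s : ℕ → ℕ}
    (hb0 : b 0 = 1) (hbs : ∀ k < r, b (k + 1) = b k + s (k + 1))
    (hiso : ∀ k < r, (d - 2) * b (k + 1) + 2 = (d - 1) * s (k + 1)) :
    ∀ k < r, s (k + 1) = d * (d - 1) ^ k := by
  have hs : ∀ k < r, s (k + 1) = (d - 2) * b k + 2 := by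
    intro k hk
    have := hiso k hk
    rw [hbs k hk] at this
    obtain ⟨e, rfl⟩ : ∃ e, d = e + 2 := ⟨d - 2, by omega⟩
    rw [Nat.add_sub_cancel, show e + 2 - 1 = e + 1 by omega] at this
    rw [Nat.add_sub_cancel]
    linarith
  intro k hk
  induction k with
  | zero => rw [hs 0 hk, hb0, pow_zero]; omega
  | succ k ih => rw [hs (k + 1) hk, hiso k (by omega), ih (by omega)]; ring

namespace SimpleGraph

/-- Meant for connected `G`: `G.dist` is `0` between unreachable vertices. -/
def IsBall {V : Type*} (G : SimpleGraph V) (x : V) (r : ℕ) (B : Finset V) : Prop :=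
  ∀ y, y ∈ B ↔ G.dist x y ≤ r

namespace IsBall

variable {V : Type*} {G : SimpleGraph V} {x y : V} {r d : ℕ} {B : Finset V}

lemma mem_self (hB : G.IsBall x r B) : x ∈ B := by
  simp [hB x]

lemma filter_dist_le (hB : G.IsBall x r B) {k : ℕ} (hk : k ≤ r) :
    G.IsBall x k (B.filter (G.dist x · ≤ k)) := fun y => by
  rw [mem_filter, hB y]
  omega

lemma card_eq_one (hG : G.Connected) (hB : G.IsBall x 0 B) : #B = 1 :=
  Finset.card_eq_one.2 ⟨x, ext fun y => by
    rw [hB y, mem_singleton, Nat.le_zero, hG.dist_eq_zero_iff, eq_comm]⟩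

lemma two_le_card (hB : G.IsBall x r B) (hr : 1 ≤ r) (hx : (G.neighborSet x).Nonempty) :
    2 ≤ #B := by
  obtain ⟨y, hy⟩ := hx
  refine one_lt_card.2 ⟨x, hB.mem_self, y, ?_, hy.ne⟩
  rwa [hB y, dist_eq_one_iff_adj.2 hy]

lemma isGraphDomain (hG : G.Connected) (hB : G.IsBall x r B) : IsGraphDomain G B := by
  have hx : x ∈ (B : Set V) := hB.mem_self
  refine ⟨⟨x, hx⟩, induce_connected_of_patches x hx fun {y} hy => ?_⟩
  obtain ⟨p, hp⟩ := hG.exists_walk_length_eq_dist x y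
  refine ⟨{v | v ∈ p.support}, fun v hv => ?_, p.start_mem_support, p.end_mem_support,
    p.connected_induce_support.preconnected _ _⟩
  rw [mem_coe, hB] at hy ⊢
  exact (dist_le_of_mem_support hp hv).trans hy

lemma dist_eq_of_mem_innerBoundary (hG : G.Connected) (hB : G.IsBall x r B)
    (hy : y ∈ innerBoundary G B) : G.dist x y = r := by
  classical
  unfold innerBoundary at hy
  obtain ⟨hyB, z, hz, hadj⟩ := mem_filter.1 hy
  rw [hB] at hyB hz
  have := hG.dist_triangle (u := x) (v := y) (w := z)
  rw [dist_eq_one_iff_adj.2 hadj] at this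
  omega

lemma mem_innerBoundary_iff (hG : G.Connected) (hG' : G.IsAcyclic)
    (hdeg : ∀ v, 1 < (G.neighborSet v).ncard) (hB : G.IsBall x r B) :
    y ∈ innerBoundary G B ↔ G.dist x y = r := by
  classical
  refine ⟨hB.dist_eq_of_mem_innerBoundary hG, fun hy => ?_⟩
  obtain ⟨z, hadj, hz⟩ := hG'.exists_adj_dist_eq_add_one (hG x y) (hdeg y)
  unfold innerBoundary
  exact mem_filter.2 ⟨(hB y).2 hy.le, z, by rw [hB]; omega, hadj⟩

lemma degIn_eq_one (hG : G.IsAcyclic) (hB : G.IsBall x r B) (hr : 1 ≤ r)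
    (hy : G.dist x y = r) : degIn G B y = 1 := by
  classical
  obtain ⟨p, hp⟩ :=
    (Reachable.of_dist_ne_zero (by omega : G.dist x y ≠ 0)).exists_walk_length_eq_dist
  have hne : ¬ p.Nil := by
    rw [← Walk.length_eq_zero_iff]
    omega
  unfold degIn
  refine Finset.card_eq_one.2 ⟨p.penultimate, ext fun z => ?_⟩
  rw [mem_filter, mem_singleton, hB]
  constructor
  · rintro ⟨hz, hadj⟩
    rcases hG.dist_eq_dist_add_one_of_adj_of_reachable x hadj p.reachable with h | h
    · exact hG.eq_penultimate_of_dist_add_one hp hadj h.symm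
    · omega
  · rintro rfl
    have := p.dist_penultimate_add_one hp hne
    exact ⟨by omega, (p.adj_penultimate hne).symm⟩

lemma tauD_eq_zero (hG : G.Connected) (hG' : G.IsAcyclic) (hB : G.IsBall x r B)
    (hr : 1 ≤ r) : tauD G B = 0 :=
  sum_eq_zero fun _ hy => by
    rw [hB.degIn_eq_one hG' hr (hB.dist_eq_of_mem_innerBoundary hG hy), Nat.sub_self]

lemma card_eq_add_card_innerBoundary (hG : G.Connected) (hG' : G.IsAcyclic)
    (hdeg : ∀ v, 1 < (G.neighborSet v).ncard) {B' : Finset V} (hB : G.IsBall x (r + 1) B)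
    (hB' : G.IsBall x r B') : #B = #B' + #(innerBoundary G B) := by
  classical
  have hB'_eq : B' = B.filter (G.dist x · ≤ r) := ext fun y => by
    rw [mem_filter, hB, hB']
    omega
  have hsphere : innerBoundary G B = B.filter (¬ G.dist x · ≤ r) := ext fun y => by
    rw [mem_filter, hB.mem_innerBoundary_iff hG hG' hdeg, hB]
    omega
  rw [hB'_eq, hsphere, card_filter_add_card_filter_not]

lemma isoperimetric_identity (hG : G.Connected) (hG' : G.IsAcyclic)
    (hdeg : ∀ v, (G.neighborSet v).ncard = d) (hd : 2 ≤ d) (hB : G.IsBall x r B)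
    (hr : 1 ≤ r) :
    (d - 2) * #B + 2 = (d - 1) * #(innerBoundary G B) := by
  have hx : (G.neighborSet x).Nonempty := Set.nonempty_of_ncard_ne_zero (by rw [hdeg x]; omega)
  simpa [hB.tauD_eq_zero hG hG' hr] using
    (hB.isGraphDomain hG).isoperimetric_identity hG' hdeg hd (hB.two_le_card hr hx)

lemma isOptimal (hG : G.Connected) (hG' : G.IsAcyclic)
    (hdeg : ∀ v, (G.neighborSet v).ncard = d) (hd : 2 ≤ d) (hB : G.IsBall x r B)
    (hr : 1 ≤ r) :
    IsOptimal G B := by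
  have hx : (G.neighborSet x).Nonempty := Set.nonempty_of_ncard_ne_zero (by rw [hdeg x]; omega)
  exact (hB.isGraphDomain hG).isOptimal_of_tauD_eq_zero hG' hdeg hd (hB.two_le_card hr hx)
    (hB.tauD_eq_zero hG hG' hr)

lemma card_innerBoundary (hG : G.Connected) (hG' : G.IsAcyclic)
    (hdeg : ∀ v, (G.neighborSet v).ncard = d) (hd : 2 ≤ d) (hB : G.IsBall x r B)
    (hr : 1 ≤ r) :
    #(innerBoundary G B) = d * (d - 1) ^ (r - 1) := by
  classical
  have hdeg' : ∀ v, 1 < (G.neighborSet v).ncard := fun v => by rw [hdeg v]; omega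
  let ball k := B.filter (G.dist x · ≤ k)
  obtain ⟨r, rfl⟩ : ∃ r', r = r' + 1 := ⟨r - 1, by omega⟩
  have hball_top : ball (r + 1) = B := filter_true_of_mem fun y hy => (hB y).1 hy
  have key := eq_mul_sub_one_pow_of_ball_identities hd (b := fun k => #(ball k))
    (s := fun k => #(innerBoundary G (ball k))) (r := r + 1)
    ((hB.filter_dist_le (Nat.zero_le _)).card_eq_one hG)
    (fun k hk => (hB.filter_dist_le hk).card_eq_add_card_innerBoundary hG hG' hdeg'
      (hB.filter_dist_le (by omega)))
    (fun k hk => (hB.filter_dist_le hk).isoperimetric_identity hG hG' hdeg hd (by omega)) r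
    (by omega)
  simpa [hball_top] using key

end IsBall

end SimpleGraph

/-- Balls in the `d`-regular tree are domains with `|∂B(x,r)| = d(d−1)^{r−1}` and
`(d−2)|B(x,r)| + 2 = (d−1)|∂B(x,r)|`; consequently they are isoperimetrically optimal. -/
theorem stmt_7 {V : Type*} (d : ℕ) (hd : 2 ≤ d) (T : SimpleGraph V)
    (hT : IsRegularTree T d) (x : V) (r : ℕ) (hr : 1 ≤ r)
    (B : Finset V) (hB : ∀ y : V, y ∈ B ↔ T.dist x y ≤ r) :
    IsGraphDomain T B ∧
    (innerBoundary T B).card = d * (d - 1) ^ (r - 1) ∧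
    (d - 2) * B.card + 2 = (d - 1) * (innerBoundary T B).card ∧
    IsOptimal T B := by
  obtain ⟨hc, hacyc, hdeg⟩ := hT
  have hball : T.IsBall x r B := hB
  exact ⟨hball.isGraphDomain hc, hball.card_innerBoundary hc hacyc hdeg hd hr,
    hball.isoperimetric_identity hc hacyc hdeg hd hr, hball.isOptimal hc hacyc hdeg hd hr⟩
end

section
/- Let D be a domain in the d-regular tree T_d with |D| ≥ 3. Then D is full if and only if there exists a domain D₁ ⊆ D such that D = D₁ ∪ ∂'D₁. -/
open SimpleGraph

lemma mem_innerBoundary' {V : Type*} {G : SimpleGraph V} {D : Finset V} {x : V} :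
    x ∈ innerBoundary G D ↔ x ∈ D ∧ ∃ y, y ∉ D ∧ G.Adj x y := by
  classical
  unfold innerBoundary
  exact Finset.mem_filter

lemma mem_residualBoundary' {V : Type*} {G : SimpleGraph V} {D : Finset V} {x : V} :
    x ∈ residualBoundary G D ↔ x ∈ innerBoundary G D ∧ 2 ≤ degIn G D x := by
  classical
  unfold residualBoundary
  exact Finset.mem_filter

lemma degIn_unique' {V : Type*} {G : SimpleGraph V} {D : Finset V} {x a b : V}
    (h : degIn G D x ≤ 1) (ha : a ∈ D) (hb : b ∈ D) (h1 : G.Adj x a) (h2 : G.Adj x b) :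
    a = b := by
  classical
  unfold degIn at h
  exact Finset.card_le_one.mp h a (Finset.mem_filter.mpr ⟨ha, h1⟩) b (Finset.mem_filter.mpr ⟨hb, h2⟩)

lemma two_le_degIn' {V : Type*} {G : SimpleGraph V} {D : Finset V} {x a b : V}
    (ha : a ∈ D) (hb : b ∈ D) (h1 : G.Adj x a) (h2 : G.Adj x b) (hab : a ≠ b) :
    2 ≤ degIn G D x := by
  classical
  unfold degIn
  exact Finset.one_lt_card.mpr ⟨a, Finset.mem_filter.mpr ⟨ha, h1⟩, b, Finset.mem_filter.mpr ⟨hb, h2⟩, hab⟩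

lemma pathIn' {V : Type*} {T : SimpleGraph V} {S : Set V} (hconn : (T.induce S).Connected)
    {a b : V} (ha : a ∈ S) (hb : b ∈ S) :
    ∃ p : T.Walk a b, p.IsPath ∧ ∀ v ∈ p.support, v ∈ S := by
  classical
  obtain ⟨w⟩ := hconn.preconnected ⟨a, ha⟩ ⟨b, hb⟩
  let f : T.induce S →g T := ⟨Subtype.val, fun {u v} h => h⟩
  refine ⟨(w.map f).bypass, (w.map f).bypass_isPath, ?_⟩
  intro v hv
  have h2 := (w.map f).support_bypass_subset hv
  rw [SimpleGraph.Walk.support_map] at h2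
  obtain ⟨⟨u, hu⟩, _, rfl⟩ := List.mem_map.mp h2
  exact hu

lemma liftWalk' {V : Type*} {T : SimpleGraph V} {S : Set V} :
    ∀ {a b : V} (p : T.Walk a b), (∀ v ∈ p.support, v ∈ S) →
      ∀ (ha : a ∈ S) (hb : b ∈ S), (T.induce S).Reachable ⟨a, ha⟩ ⟨b, hb⟩ := by
  intro a b p
  induction p with
  | nil => intro _ ha hb; exact Reachable.refl _
  | @cons u c w h q ih =>
    intro hsup ha hb
    have hc : c ∈ S := hsup c (by simp)
    have hadj : (T.induce S).Adj ⟨u, ha⟩ ⟨c, hc⟩ := h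
    exact hadj.reachable.trans (ih (fun v hv => hsup v (by simp [hv])) hc hb)

lemma twoNbrs' {V : Type*} {G : SimpleGraph V} :
    ∀ {x y : V} (p : G.Walk x y), p.IsPath → ∀ v ∈ p.support, v ≠ x → v ≠ y →
      ∃ a b, a ≠ b ∧ G.Adj v a ∧ G.Adj v b ∧ a ∈ p.support ∧ b ∈ p.support := by
  intro x y p
  induction p with
  | nil => intro _ v hv hvx _; simp at hv; exact absurd hv hvx
  | @cons x c y h q ih =>
    intro hp v hv hvx hvy
    have hvq : v ∈ q.support := by
      simp only [Walk.support_cons, List.mem_cons] at hv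
      tauto
    by_cases hvc : v = c
    · subst hvc
      cases q with
      | nil => exact absurd rfl hvy
      | @cons c m y' h2 q2 =>
        refine ⟨x, m, ?_, h.symm, h2, by simp, ?_⟩
        · intro hxm
          have hx : x ∉ (Walk.cons h2 q2).support := ((Walk.cons_isPath_iff _ _).mp hp).2
          apply hx
          rw [hxm]
          simp [Walk.support_cons, q2.start_mem_support]
        · simp [Walk.support_cons, q2.start_mem_support]
    · obtain ⟨a, b, hab, h1, h2, h3, h4⟩ := ih hp.of_cons v hvq hvc hvy
      exact ⟨a, b, hab, h1, h2, by simp [Walk.support_cons, h3], by simp [Walk.support_cons, h4]⟩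

/-- For a domain of size `≥ 3`: full iff `D = D₁ ∪ ∂'D₁` for some domain `D₁ ⊆ D`. -/
theorem stmt_15 {V : Type*} (d : ℕ) (hd : 2 ≤ d) (T : SimpleGraph V)
    (hT : IsRegularTree T d) (D : Finset V) (hD : IsGraphDomain T D) (hcard : 3 ≤ D.card) :
    residualBoundary T D = ∅ ↔
      ∃ D₁ : Finset V, D₁ ⊆ D ∧ IsGraphDomain T D₁ ∧
        (↑D : Set V) = (↑D₁ : Set V) ∪ outerBoundary T D₁ := by
  classical
  constructor
  · intro hres
    have hfull : ∀ x ∈ innerBoundary T D, degIn T D x ≤ 1 := by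
      intro x hx
      by_contra hcon
      push_neg at hcon
      have hmem : x ∈ residualBoundary T D := mem_residualBoundary'.mpr ⟨hx, hcon⟩
      simp [hres] at hmem
    have hnbr : ∀ x ∈ D, ∃ u ∈ D, T.Adj x u := by
      intro x hx
      obtain ⟨y, hy, hyx⟩ := Finset.exists_mem_ne (s := D) (by omega) x
      obtain ⟨p, hp, hsup⟩ := pathIn' hD.2 (Finset.mem_coe.mpr hx) (Finset.mem_coe.mpr hy)
      cases p with
      | nil => exact absurd rfl hyx
      | @cons _ m _ h q =>
        refine ⟨m, ?_, h⟩
        exact hsup m (by rw [Walk.support_cons]; exact List.mem_cons_of_mem _ q.start_mem_support)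
    have hL : ∀ x y, x ∈ D → y ∈ D → T.Adj x y → degIn T D x ≤ 1 → degIn T D y ≤ 1 → False := by
      intro x y hx hy hxy hdx hdy
      have hzne : (D \ {x, y}).Nonempty := by
        rw [← Finset.card_pos]
        have h2 : ({x, y} : Finset V).card ≤ 2 :=
          le_trans (Finset.card_insert_le _ _) (by simp)
        have h3 := Finset.le_card_sdiff ({x, y} : Finset V) D
        omega
      obtain ⟨z, hz⟩ := hzne
      rw [Finset.mem_sdiff] at hz
      obtain ⟨hzD, hzxy⟩ := hz
      simp only [Finset.mem_insert, Finset.mem_singleton, not_or] at hzxy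
      obtain ⟨p, hp, hsup⟩ := pathIn' hD.2 (Finset.mem_coe.mpr hx) (Finset.mem_coe.mpr hzD)
      cases p with
      | nil => exact hzxy.1 rfl
      | @cons _ m _ h q =>
        have hmD : m ∈ D :=
          hsup m (by rw [Walk.support_cons]; exact List.mem_cons_of_mem _ q.start_mem_support)
        have hm : m = y := degIn_unique' hdx hmD hy h hxy
        subst hm
        cases q with
        | nil => exact hzxy.2 rfl
        | @cons _ m2 _ h2 q2 =>
          have hm2D : m2 ∈ D := hsup m2 (by
            rw [Walk.support_cons, Walk.support_cons]
            exact List.mem_cons_of_mem _ (List.mem_cons_of_mem _ q2.start_mem_support))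
          have hm2 : m2 = x := degIn_unique' hdy hm2D hx h2 hxy.symm
          have hxn : x ∉ (Walk.cons h2 q2).support := ((Walk.cons_isPath_iff _ _).mp hp).2
          apply hxn
          rw [Walk.support_cons]
          exact List.mem_cons_of_mem _ (hm2 ▸ q2.start_mem_support)
    set B := innerBoundary T D with hB
    set D₁ := D \ B with hD₁def
    have hsub : D₁ ⊆ D := Finset.sdiff_subset
    have hInt : ∀ v ∈ D₁, ∀ y, T.Adj v y → y ∈ D := by
      intro v hv y hadj
      rw [hD₁def, Finset.mem_sdiff] at hv
      by_contra hy
      exact hv.2 (mem_innerBoundary'.mpr ⟨hv.1, y, hy, hadj⟩)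
    have hbd : ∀ v ∈ D, v ∉ D₁ → ∃ u ∈ D₁, T.Adj v u := by
      intro v hvD hv
      have hvB : v ∈ B := by
        by_contra hvB
        exact hv (by rw [hD₁def, Finset.mem_sdiff]; exact ⟨hvD, hvB⟩)
      obtain ⟨u, huD, hadj⟩ := hnbr v hvD
      have huD₁ : u ∈ D₁ := by
        rw [hD₁def, Finset.mem_sdiff]
        refine ⟨huD, fun huB => ?_⟩
        exact hL v u hvD huD hadj (hfull v hvB) (hfull u huB)
      exact ⟨u, huD₁, hadj⟩
    have hne : D₁.Nonempty := by
      obtain ⟨x, hx⟩ := hD.1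
      by_cases hxD₁ : x ∈ D₁
      · exact ⟨x, hxD₁⟩
      · obtain ⟨u, hu, _⟩ := hbd x hx hxD₁
        exact ⟨u, hu⟩
    have hconn : (T.induce (↑D₁ : Set V)).Connected := by
      rw [SimpleGraph.connected_iff]
      refine ⟨?_, ⟨⟨hne.choose, Finset.mem_coe.mpr hne.choose_spec⟩⟩⟩
      rintro ⟨x, hx⟩ ⟨y, hy⟩
      have hxD₁ : x ∈ D₁ := hx
      have hyD₁ : y ∈ D₁ := hy
      obtain ⟨p, hp, hsup⟩ := pathIn' hD.2 (Finset.mem_coe.mpr (hsub hxD₁))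
        (Finset.mem_coe.mpr (hsub hyD₁))
      have hsupD₁ : ∀ v ∈ p.support, v ∈ (↑D₁ : Set V) := by
        intro v hv
        by_cases hvx : v = x
        · subst hvx; exact hx
        by_cases hvy : v = y
        · subst hvy; exact hy
        obtain ⟨a, b, hab, h1, h2, h3, h4⟩ := twoNbrs' p hp v hv hvx hvy
        have hdeg : 2 ≤ degIn T D v :=
          two_le_degIn' (Finset.mem_coe.mp (hsup a h3)) (Finset.mem_coe.mp (hsup b h4)) h1 h2 hab
        have hvD : v ∈ D := Finset.mem_coe.mp (hsup v hv)
        have hvD₁ : v ∈ D₁ := by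
          rw [hD₁def, Finset.mem_sdiff]
          refine ⟨hvD, fun hvB => ?_⟩
          have := hfull v hvB
          omega
        exact Finset.mem_coe.mpr hvD₁
      exact liftWalk' p hsupD₁ hx hy
    refine ⟨D₁, hsub, ⟨hne, hconn⟩, ?_⟩
    ext v
    simp only [Set.mem_union, Finset.mem_coe, outerBoundary, Set.mem_setOf_eq]
    constructor
    · intro hvD
      by_cases hv : v ∈ D₁
      · exact Or.inl hv
      · obtain ⟨u, huD₁, hadj⟩ := hbd v hvD hv
        exact Or.inr ⟨hv, u, huD₁, hadj.symm⟩
    · rintro (hv | ⟨-, x, hx, hadj⟩)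
      · exact hsub hv
      · exact hInt x hx v hadj
  · rintro ⟨D₁, hsub, hD₁, heq⟩
    have hpu := SimpleGraph.isAcyclic_iff_path_unique.mp hT.2.1
    rw [Finset.eq_empty_iff_forall_notMem]
    intro r hr
    obtain ⟨hrB, hdeg⟩ := mem_residualBoundary'.mp hr
    obtain ⟨hrD, z, hzD, hadjrz⟩ := mem_innerBoundary'.mp hrB
    by_cases hrD₁ : r ∈ D₁
    · apply hzD
      have hz : z ∈ (↑D : Set V) := by
        rw [heq]
        exact Or.inr ⟨fun hz => hzD (hsub hz), r, hrD₁, hadjrz⟩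
      exact Finset.mem_coe.mp hz
    · have hrout : r ∈ outerBoundary T D₁ := by
        have hmem : r ∈ (↑D : Set V) := Finset.mem_coe.mpr hrD
        rw [heq] at hmem
        rcases hmem with h | h
        · exact absurd (Finset.mem_coe.mp h) hrD₁
        · exact h
      obtain ⟨-, w, hwD₁, hadjwr⟩ := hrout
      have hdeg' : 1 < (D.filter (fun y => T.Adj r y)).card := by
        have h := hdeg
        unfold degIn at h
        omega
      obtain ⟨u, hu, hune⟩ := Finset.exists_mem_ne hdeg' w
      rw [Finset.mem_filter] at hu
      obtain ⟨huD, hadjru⟩ := hu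
      by_cases huD₁ : u ∈ D₁
      · obtain ⟨P, hP, hPsup⟩ := pathIn' hD₁.2 (Finset.mem_coe.mpr hwD₁) (Finset.mem_coe.mpr huD₁)
        have hrne : r ∉ P.support := fun hmem => hrD₁ (Finset.mem_coe.mp (hPsup r hmem))
        have hP2 : (Walk.cons hadjwr.symm P).IsPath :=
          (Walk.cons_isPath_iff _ _).mpr ⟨hP, hrne⟩
        have hP1 : (Walk.cons hadjru Walk.nil : T.Walk r u).IsPath := by
          simp [Walk.cons_isPath_iff, hadjru.ne]
        have hequ := hpu ⟨Walk.cons hadjru Walk.nil, hP1⟩ ⟨Walk.cons hadjwr.symm P, hP2⟩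
        have hval : (Walk.cons hadjru Walk.nil : T.Walk r u) = Walk.cons hadjwr.symm P :=
          congrArg Subtype.val hequ
        have hw : w ∈ (Walk.cons hadjru (Walk.nil : T.Walk u u)).support := by
          rw [hval, Walk.support_cons]
          exact List.mem_cons_of_mem _ P.start_mem_support
        simp only [Walk.support_cons, Walk.support_nil, List.mem_cons, List.mem_singleton,
          List.not_mem_nil, or_false] at hw
        rcases hw with hw | hw
        · exact hadjwr.ne hw
        · exact hune hw.symm
      · have huout : u ∈ outerBoundary T D₁ := by
          have hmem : u ∈ (↑D : Set V) := Finset.mem_coe.mpr huD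
          rw [heq] at hmem
          rcases hmem with h | h
          · exact absurd (Finset.mem_coe.mp h) huD₁
          · exact h
        obtain ⟨-, w', hw'D₁, hadjw'u⟩ := huout
        obtain ⟨P, hP, hPsup⟩ := pathIn' hD₁.2 (Finset.mem_coe.mpr hwD₁) (Finset.mem_coe.mpr hw'D₁)
        have hrne : r ∉ P.support := fun hmem => hrD₁ (Finset.mem_coe.mp (hPsup r hmem))
        have hune' : u ∉ P.support := fun hmem => huD₁ (Finset.mem_coe.mp (hPsup u hmem))
        have hP2 : (Walk.cons hadjwr.symm P).IsPath :=
          (Walk.cons_isPath_iff _ _).mpr ⟨hP, hrne⟩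
        have hrw' : r ≠ w' := fun h => hrD₁ (h ▸ hw'D₁)
        have hP1 : (Walk.cons hadjru (Walk.cons hadjw'u.symm Walk.nil) : T.Walk r w').IsPath := by
          rw [Walk.cons_isPath_iff]
          refine ⟨by simp [Walk.cons_isPath_iff, hadjw'u.ne'], ?_⟩
          simp only [Walk.support_cons, Walk.support_nil, List.mem_cons, List.mem_singleton,
            List.not_mem_nil, or_false, not_or]
          exact ⟨hadjru.ne, hrw'⟩
        have hequ := hpu ⟨_, hP1⟩ ⟨_, hP2⟩
        have hval : (Walk.cons hadjru (Walk.cons hadjw'u.symm Walk.nil) : T.Walk r w')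
            = Walk.cons hadjwr.symm P := congrArg Subtype.val hequ
        have hu1 : u ∈ (Walk.cons hadjwr.symm P).support := by
          rw [← hval, Walk.support_cons]
          exact List.mem_cons_of_mem _ (by simp)
        rw [Walk.support_cons] at hu1
        rcases List.mem_cons.mp hu1 with hu1 | hu1
        · exact hadjru.ne hu1.symm
        · exact hune' hu1
end
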